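/- arXiv:1908.07518 — 3 statements merged into one kernel-verified Lean document; each statement's English description precedes it below -/
import Mathlib

section
/- If φ is differentiable on (0,1), satisfies φ'(x) = π² + φ(x)² for all x ∈ (0,1), and φ(1/2) = 0, then φ(x) = -π cot(πx) for all x ∈ (0,1). -/
open Set

theorem ode_solution_unique (φ : ℝ → ℝ)
    (hderiv : ∀ x ∈ Ioo (0 : ℝ) 1, HasDerivAt φ (Real.pi ^ 2 + φ x ^ 2) x)
    (hinit : φ (1 / 2) = 0) :
    ∀ x ∈ Ioo (0 : ℝ) 1, φ x = -Real.pi * Real.cot (Real.pi * x) := by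
  have hπ : (0:ℝ) < Real.pi := Real.pi_pos
  have hπ0 : Real.pi ≠ 0 := ne_of_gt hπ
  set g : ℝ → ℝ := fun x => Real.arctan (φ x / Real.pi) with hg_def
  have hg : ∀ x ∈ Ioo (0:ℝ) 1, HasDerivAt g Real.pi x := by
    intro x hx
    have h1 : HasDerivAt (fun y => φ y / Real.pi)
        ((Real.pi ^ 2 + φ x ^ 2) / Real.pi) x := (hderiv x hx).div_const _
    have h2 := h1.arctan
    convert h2 using 1
    have hpos : (0:ℝ) < Real.pi ^ 2 + φ x ^ 2 := by positivity
    field_simp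
  have hhalf : g (1/2) = 0 := by
    simp only [hg_def, hinit]
    norm_num
  have hmem : (1/2 : ℝ) ∈ Ioo (0:ℝ) 1 := by norm_num
  have key : ∀ x ∈ Ioo (0:ℝ) 1, g x = Real.pi * x - Real.pi / 2 := by
    intro x hx
    rcases lt_trichotomy x (1/2) with h | h | h
    · have hsub : Icc x (1/2 : ℝ) ⊆ Ioo (0:ℝ) 1 := fun y hy =>
        ⟨lt_of_lt_of_le hx.1 hy.1, lt_of_le_of_lt hy.2 (by norm_num)⟩
      have hcont : ContinuousOn g (Icc x (1/2)) := fun y hy =>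
        ((hg y (hsub hy)).continuousAt).continuousWithinAt
      obtain ⟨c, _, hc⟩ := exists_hasDerivAt_eq_slope g (fun _ => Real.pi) h hcont
        (fun y hy => hg y (hsub ⟨le_of_lt hy.1, le_of_lt hy.2⟩))
      rw [hhalf] at hc
      have hne : (1/2 : ℝ) - x ≠ 0 := by linarith
      rw [eq_div_iff hne] at hc
      linarith
    · rw [h, hhalf]; ring
    · have hsub : Icc (1/2 : ℝ) x ⊆ Ioo (0:ℝ) 1 := fun y hy =>
        ⟨lt_of_lt_of_le (by norm_num) hy.1, lt_of_le_of_lt hy.2 hx.2⟩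
      have hcont : ContinuousOn g (Icc (1/2) x) := fun y hy =>
        ((hg y (hsub hy)).continuousAt).continuousWithinAt
      obtain ⟨c, _, hc⟩ := exists_hasDerivAt_eq_slope g (fun _ => Real.pi) h hcont
        (fun y hy => hg y (hsub ⟨le_of_lt hy.1, le_of_lt hy.2⟩))
      rw [hhalf] at hc
      have hne : x - (1/2 : ℝ) ≠ 0 := by linarith
      rw [eq_div_iff hne] at hc
      linarith
  intro x hx
  have h1 : Real.tan (g x) = φ x / Real.pi := Real.tan_arctan _
  rw [key x hx] at h1
  have h2 : Real.tan (Real.pi * x - Real.pi / 2) = -Real.cot (Real.pi * x) := by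
    rw [show Real.pi * x - Real.pi / 2 = -(Real.pi / 2 - Real.pi * x) by ring,
      Real.tan_neg, Real.tan_pi_div_two_sub, Real.cot_eq_cos_div_sin,
      Real.tan_eq_sin_div_cos, inv_div]
  rw [h2] at h1
  field_simp at h1
  linarith
end

section
/- Define Sₙ as the n-th derivative at 0 of the function x ↦ x·cot x (extended analytically with value 1 at 0). Then S₀ = 1, S₁ = 0, and for n > 2, (n+1)Sₙ = -∑_{r=1}^{n-1} C(n,r) S_r S_{n-r}. Moreover Sₙ = 0 for odd n. -/
noncomputable def xCot (x : ℝ) : ℝ := if x = 0 then 1 else x * Real.cot x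

noncomputable def S (n : ℕ) : ℝ := iteratedDeriv n xCot 0

/-
Since cot' = -1 - cot², the function f(x) = x cot x satisfies x f'(x) = f(x) - f(x)² - x² near 0,
and f is analytic there (it is cos x divided by the analytic continuation of sin x / x).
Taking n-th derivatives at 0 with the Leibniz rule gives n Sₙ = Sₙ - ∑_{r=0}^{n} C(n,r) S_r S_{n-r}
for n > 2; the terms r = 0 and r = n contribute 2 Sₙ because S₀ = 1. The odd derivatives vanish
because f is even.
-/

open Filter Topology Finset

theorem AnalyticAt.dslope {𝕜 E : Type*} [NontriviallyNormedField 𝕜] [NormedAddCommGroup E]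
    [NormedSpace 𝕜 E] {f : 𝕜 → E} {z : 𝕜} (h : AnalyticAt 𝕜 f z) :
    AnalyticAt 𝕜 (dslope f z) z := by
  obtain ⟨p, hp⟩ := h
  exact ⟨p.fslope, hp.has_fpower_series_dslope_fslope⟩

theorem Function.Even.iteratedDeriv_zero_eq_zero {𝕜 : Type*} [NontriviallyNormedField 𝕜]
    [CharZero 𝕜] {f : 𝕜 → 𝕜} (hf : f.Even) {n : ℕ} (hn : Odd n) :
    iteratedDeriv n f 0 = 0 := by
  have h := iteratedDeriv_comp_neg n f 0
  simp only [funext hf, hn.neg_one_pow, neg_zero, smul_eq_mul, neg_one_mul] at h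
  exact CharZero.eq_neg_self_iff.mp h

section

variable {𝕜 : Type*} [NontriviallyNormedField 𝕜] {f : 𝕜 → 𝕜} {n : ℕ}

theorem iteratedDeriv_id_mul_deriv_zero (hf : ContDiffAt 𝕜 (n + 1) f 0) :
    iteratedDeriv n (fun z => z * deriv f z) 0 = n * iteratedDeriv n f 0 := by
  rw [iteratedDeriv_fun_mul (f := fun z => z) contDiffAt_id (hf.derivWithin le_rfl)]
  cases n with
  | zero => simp
  | succ n =>
    simp [iteratedDeriv_fun_id_zero, sum_ite_eq', iteratedDeriv_succ']

theorem sum_range_choose_mul_iteratedDeriv_zero_eq (hf0 : f 0 = 1) (hn : 0 < n) :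
    ∑ r ∈ range (n + 1), (n.choose r : 𝕜) * iteratedDeriv r f 0 * iteratedDeriv (n - r) f 0 =
      2 * iteratedDeriv n f 0 +
        ∑ r ∈ Ico 1 n, (n.choose r : 𝕜) * iteratedDeriv r f 0 * iteratedDeriv (n - r) f 0 := by
  rw [sum_range_succ, range_eq_Ico, sum_eq_sum_Ico_succ_bot hn]
  simp only [Nat.choose_zero_right, Nat.choose_self, Nat.cast_one, iteratedDeriv_zero, hf0,
    tsub_zero, tsub_self, one_mul, mul_one, zero_add]
  ring

theorem iteratedDeriv_zero_recurrence_of_eventuallyEq (hf : ContDiffAt 𝕜 (n + 1) f 0)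
    (hf0 : f 0 = 1) (hode : (fun z => z * deriv f z) =ᶠ[𝓝 0] fun z => f z - f z ^ 2 - z ^ 2)
    (hn : 2 < n) :
    ((n : 𝕜) + 1) * iteratedDeriv n f 0 =
      -∑ r ∈ Ico 1 n, (n.choose r : 𝕜) * iteratedDeriv r f 0 * iteratedDeriv (n - r) f 0 := by
  have hfn : ContDiffAt 𝕜 n f 0 := hf.of_le (by norm_cast; omega)
  have h := (hode.iteratedDeriv n).eq_of_nhds
  rw [iteratedDeriv_id_mul_deriv_zero hf, iteratedDeriv_fun_sub (hfn.sub (hfn.pow 2)) (by fun_prop),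
    iteratedDeriv_fun_sub hfn (hfn.pow 2), show (fun z => f z ^ 2) = fun z => f z * f z by
      simp only [sq], iteratedDeriv_fun_mul hfn hfn,
    sum_range_choose_mul_iteratedDeriv_zero_eq hf0 (by omega), iteratedDeriv_fun_pow_zero,
    if_neg (by omega)] at h
  linear_combination h

theorem xCot_eq_cos_div_dslope_sin : xCot = fun x => Real.cos x / dslope Real.sin 0 x := by
  funext x
  rcases eq_or_ne x 0 with rfl | hx
  · simp [xCot]
  · rw [xCot, if_neg hx, dslope_of_ne _ hx, slope_def_field, Real.cot_eq_cos_div_sin]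
    simp only [Real.sin_zero, sub_zero]
    field_simp

theorem analyticAt_xCot : AnalyticAt ℝ xCot 0 := by
  rw [xCot_eq_cos_div_dslope_sin]
  exact Real.analyticAt_cos.div Real.analyticAt_sin.dslope (by simp)

theorem xCot_even : xCot.Even := by
  intro x
  simp [xCot, Real.cot_eq_cos_div_sin, div_neg]

theorem xCot_ode :
    (fun z => z * deriv xCot z) =ᶠ[𝓝 0] fun z => xCot z - xCot z ^ 2 - z ^ 2 := by
  filter_upwards [Ioo_mem_nhds (neg_neg_of_pos Real.pi_pos) Real.pi_pos] with z hz
  rcases eq_or_ne z 0 with rfl | hz0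
  · simp [xCot]
  have hsin : Real.sin z ≠ 0 := by
    rwa [Ne, Real.sin_eq_zero_iff_of_lt_of_lt hz.1 hz.2]
  have hloc : xCot =ᶠ[𝓝 z] fun y => y * Real.cos y / Real.sin y := by
    filter_upwards [eventually_ne_nhds hz0] with y hy
    rw [xCot, if_neg hy, Real.cot_eq_cos_div_sin, mul_div_assoc]
  have hderiv :=
    ((hasDerivAt_id' z).fun_mul (Real.hasDerivAt_cos z)).fun_div (Real.hasDerivAt_sin z) hsin
  rw [hloc.deriv_eq, hderiv.deriv, hloc.eq_of_nhds]
  field_simp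
  ring

theorem xcot_derivative_numbers :
    S 0 = 1 ∧ S 1 = 0 ∧
      (∀ n : ℕ, 2 < n →
        ((n : ℝ) + 1) * S n =
          -∑ r ∈ Finset.Ico 1 n, ((n.choose r : ℝ)) * S r * S (n - r)) ∧
      ∀ n : ℕ, Odd n → S n = 0 := by
  have hS0 : S 0 = 1 := by simp [S, xCot]
  have hodd : ∀ n : ℕ, Odd n → S n = 0 := fun n hn => xCot_even.iteratedDeriv_zero_eq_zero hn
  refine ⟨hS0, hodd 1 odd_one, fun n hn => ?_, hodd⟩
  exact iteratedDeriv_zero_recurrence_of_eventuallyEq analyticAt_xCot.contDiffAt hS0 xCot_ode hn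
end
end

section
/- For every integer k ≥ 2, (k + 1/2) ζ(2k) = ∑_{m=1}^{k-1} ζ(2m) ζ(2k-2m). -/
/-!
The exponential generating function `B(x) = x / (eˣ - 1) = ∑ bₙ xⁿ`, `bₙ = Bₙ / n!`, satisfies
`B² = (1 - x) B - x B'`: differentiate `B (eˣ - 1) = x` and cancel `eˣ - 1`. Comparing the
coefficients of `x^(2k)`, where all odd `bₙ` except `b₁` vanish, gives Euler's convolution
`∑_{m=1}^{k-1} b_{2m} b_{2k-2m} = -(2k+1) b_{2k}`, and Euler's formula
`ζ(2m) = (-1)^(m+1) (2π)^(2m) b_{2m} / 2` turns it into the recurrence.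
-/

open PowerSeries Nat Finset Real

theorem Finset.sum_range_two_mul_add_one_of_odd {M : Type*} [AddCommMonoid M] (g : ℕ → M)
    (hg : ∀ m, Odd m → g m = 0) (N : ℕ) :
    ∑ m ∈ range (2 * N + 1), g m = ∑ m ∈ range (N + 1), g (2 * m) := by
  induction N with
  | zero => simp
  | succ N ih =>
    rw [show 2 * (N + 1) + 1 = 2 * N + 1 + 1 + 1 by ring, sum_range_succ, sum_range_succ, ih,
      hg _ (odd_two_mul_add_one N), add_zero, sum_range_succ _ (N + 1), mul_add_one]

section Bernoulli

variable {A : Type*} [CommRing A] [Algebra ℚ A]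

theorem coeff_bernoulliPowerSeries (n : ℕ) :
    coeff n (bernoulliPowerSeries A) = algebraMap ℚ A (bernoulli n / n !) :=
  coeff_mk _ _

theorem coeff_bernoulliPowerSeries_of_odd {n : ℕ} (hodd : Odd n) (hn : 1 < n) :
    coeff n (bernoulliPowerSeries A) = 0 := by
  rw [coeff_bernoulliPowerSeries, bernoulli_eq_zero_of_odd hodd hn, zero_div, map_zero]

variable [IsDomain A]

variable (A) in
theorem bernoulliPowerSeries_sq :
    bernoulliPowerSeries A ^ 2 =
      (1 - X) * bernoulliPowerSeries A - X * d⁄dX A (bernoulliPowerSeries A) := by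
  set B := bernoulliPowerSeries A
  set E := exp A - 1
  have hBE : B * E = X := bernoulliPowerSeries_mul_exp_sub_one A
  have hE : E ≠ 0 := fun h => by simpa [E] using congrArg (coeff 1) h
  have hdBE : B * (E + 1) + E * d⁄dX A B = 1 := by
    have := congrArg (d⁄dX A) hBE
    rwa [Derivation.leibniz, smul_eq_mul, smul_eq_mul, map_sub, derivative_exp,
      Derivation.map_one_eq_zero, sub_zero, derivative_X, ← sub_add_cancel (exp A) 1] at this
  refine mul_left_cancel₀ hE ?_
  linear_combination (B - 1) * hBE + X * hdBE

theorem sum_antidiagonal_coeff_bernoulliPowerSeries_mul (n : ℕ) :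
    ∑ p ∈ antidiagonal (n + 1),
        coeff p.1 (bernoulliPowerSeries A) * coeff p.2 (bernoulliPowerSeries A) =
      -(n * coeff (n + 1) (bernoulliPowerSeries A)) - coeff n (bernoulliPowerSeries A) := by
  have h := congrArg (coeff (n + 1)) (bernoulliPowerSeries_sq A)
  rw [sq, coeff_mul, sub_mul, one_mul, map_sub, map_sub, coeff_succ_X_mul, coeff_succ_X_mul,
    coeff_derivative] at h
  rw [h]
  ring

theorem sum_Ico_coeff_bernoulliPowerSeries_even_mul {k : ℕ} (hk : 2 ≤ k) :
    ∑ m ∈ Ico 1 k,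
        coeff (2 * m) (bernoulliPowerSeries A) * coeff (2 * (k - m)) (bernoulliPowerSeries A) =
      -((2 * k + 1) * coeff (2 * k) (bernoulliPowerSeries A)) := by
  have hb : coeff (2 * k - 1) (bernoulliPowerSeries A) = 0 :=
    coeff_bernoulliPowerSeries_of_odd ⟨k - 1, by omega⟩ (by omega)
  have hodd : ∀ i, Odd i →
      coeff i (bernoulliPowerSeries A) * coeff (2 * k - i) (bernoulliPowerSeries A) = 0 := by
    intro i hi
    rcases eq_or_ne i 1 with rfl | hi1
    · rw [hb, mul_zero]
    · rw [coeff_bernoulliPowerSeries_of_odd hi (by obtain ⟨j, rfl⟩ := hi; omega), zero_mul]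
  have h := sum_antidiagonal_coeff_bernoulliPowerSeries_mul (A := A) (2 * k - 1)
  rw [show 2 * k - 1 + 1 = 2 * k by omega, hb, sub_zero,
    Nat.sum_antidiagonal_eq_sum_range_succ (fun i j => coeff i _ * coeff j _),
    succ_eq_add_one, sum_range_two_mul_add_one_of_odd _ hodd, sum_range_succ, range_eq_Ico,
    sum_eq_sum_Ico_succ_bot (by omega)] at h
  simp only [← Nat.mul_sub, Nat.sub_self, mul_zero, Nat.sub_zero] at h
  rw [coeff_bernoulliPowerSeries 0, bernoulli_zero, factorial_zero, cast_one, div_one, map_one,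
    zero_add, Nat.cast_sub (by omega)] at h
  push_cast at h
  linear_combination h

end Bernoulli

theorem riemannZeta_two_mul_nat_eq_coeff_bernoulliPowerSeries {k : ℕ} (hk : k ≠ 0) :
    riemannZeta (2 * k) =
      (-1) ^ (k + 1) * (2 * π) ^ (2 * k) / 2 * coeff (2 * k) (bernoulliPowerSeries ℂ) := by
  obtain ⟨j, rfl⟩ := exists_eq_add_one_of_ne_zero hk
  rw [riemannZeta_two_mul_nat hk, coeff_bernoulliPowerSeries,
    show 2 * (j + 1) - 1 = 2 * j + 1 by omega]
  simp only [eq_ratCast, Rat.cast_div, Rat.cast_natCast]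
  ring

theorem zeta_even_recurrence (k : ℕ) (hk : 2 ≤ k) :
    ((k : ℂ) + 1 / 2) * riemannZeta (2 * k) =
      ∑ m ∈ Finset.Ico 1 k, riemannZeta (2 * m) * riemannZeta (2 * (k - m)) := by
  have hterm : ∀ m ∈ Ico 1 k, riemannZeta (2 * m) * riemannZeta (2 * (k - m)) =
      (-1) ^ k * (2 * π) ^ (2 * k) / 4 *
        (coeff (2 * m) (bernoulliPowerSeries ℂ) * coeff (2 * (k - m)) (bernoulliPowerSeries ℂ)) := by
    intro m hm
    obtain ⟨hm0, hmk⟩ := mem_Ico.mp hm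
    rw [← Nat.cast_sub hmk.le,
      riemannZeta_two_mul_nat_eq_coeff_bernoulliPowerSeries (by omega),
      riemannZeta_two_mul_nat_eq_coeff_bernoulliPowerSeries (by omega)]
    obtain ⟨j, rfl⟩ := exists_add_of_le hmk.le
    rw [add_tsub_cancel_left]
    ring
  rw [sum_congr rfl hterm, ← mul_sum, sum_Ico_coeff_bernoulliPowerSeries_even_mul hk,
    riemannZeta_two_mul_nat_eq_coeff_bernoulliPowerSeries (by omega)]
  ring
end
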